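/- For elementary CA rule 140, the state of cell j after n iterations (n ≥ 2) starting from any initial configuration x ∈ {0,1}^ℤ is given by [F140^n(x)]_j = (1−x_{j−1})·x_j + ∏_{i=j−1}^{j+n} x_i. -/

import Mathlib

/-!
On a binary configuration, `F140 x j = 1` iff `x j = 1` and (`x (j-1) = 0` or `x (j+1) = 1`).
Hence rule 140 leaves the term `(1 - x (j-1)) * x j` (the left end of a block of ones) unchanged,
while a block `x a = ⋯ = x b = 1` with `a < b` survives one step iff `x (b+1) = 1`, i.e.
`∏_{[a,b]} F140 x = ∏_{[a,b+1]} x`. Induction on `n` then adds one factor to the product per step.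
-/

/-- Polynomial form of the local function of rule 140. -/
def f140 (a b c : ℤ) : ℤ := (1 - a) * b + a * b * c

/-- Global map of rule 140 on configurations. -/
def F140 (x : ℤ → ℤ) : ℤ → ℤ := fun i => f140 (x (i - 1)) (x i) (x (i + 1))

open Finset

theorem Int.prod_Icc_add_one_right {M : Type*} [CommMonoid M] (f : ℤ → M) {a b : ℤ}
    (h : a ≤ b + 1) : ∏ i ∈ Icc a (b + 1), f i = (∏ i ∈ Icc a b, f i) * f (b + 1) := by
  rw [← insert_Icc_right_eq_Icc_add_one h, prod_insert (by simp), mul_comm]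

section Binary

variable {x : ℤ → ℤ}

theorem F140_eq_zero_or_one (hx : ∀ i, x i = 0 ∨ x i = 1) (i : ℤ) :
    F140 x i = 0 ∨ F140 x i = 1 := by
  rcases hx (i - 1) with h₁ | h₁ <;> rcases hx i with h₂ | h₂ <;>
    rcases hx (i + 1) with h₃ | h₃ <;> simp [F140, f140, h₁, h₂, h₃]

theorem one_sub_F140_mul_F140 (hx : ∀ i, x i = 0 ∨ x i = 1) (j : ℤ) :
    (1 - F140 x (j - 1)) * F140 x j = (1 - x (j - 1)) * x j := by
  rcases hx (j - 2) with h₁ | h₁ <;> rcases hx (j - 1) with h₂ | h₂ <;>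
    rcases hx j with h₃ | h₃ <;> rcases hx (j + 1) with h₄ | h₄ <;>
    simp [F140, f140, h₁, h₂, h₃, h₄, show j - 1 - 1 = j - 2 by ring]

theorem prod_Icc_F140 (hx : ∀ i, x i = 0 ∨ x i = 1) {a b : ℤ} (hab : a < b) :
    ∏ i ∈ Icc a b, F140 x i = ∏ i ∈ Icc a (b + 1), x i := by
  replace hab : a + 1 ≤ b := hab
  induction b, hab using Int.leInduction with
  | base =>
    rw [Int.prod_Icc_add_one_right _ (by omega), Int.prod_Icc_add_one_right _ (by omega),
      Int.prod_Icc_add_one_right _ (by omega), Icc_self, prod_singleton, prod_singleton]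
    rcases hx (a - 1) with h₁ | h₁ <;> rcases hx a with h₂ | h₂ <;>
      rcases hx (a + 1) with h₃ | h₃ <;> rcases hx (a + 1 + 1) with h₄ | h₄ <;>
      simp [F140, f140, h₁, h₂, h₃, h₄]
  | succ b hab ih =>
    rw [Int.prod_Icc_add_one_right _ (by omega), ih,
      Int.prod_Icc_add_one_right (b := b + 1) _ (by omega),
      Int.prod_Icc_add_one_right (b := b) _ (by omega)]
    rcases hx b with h₁ | h₁
    · have hzero : ∏ i ∈ Icc a b, x i = 0 := prod_eq_zero (right_mem_Icc.mpr (by omega)) h₁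
      simp only [hzero, zero_mul]
    · rcases hx (b + 1) with h₂ | h₂ <;> simp [F140, f140, h₁, h₂]

end Binary

theorem F140_iterate_apply {x : ℤ → ℤ} (hx : ∀ i, x i = 0 ∨ x i = 1) (n : ℕ) (j : ℤ) :
    (F140^[n] x) j = (1 - x (j - 1)) * x j + ∏ i ∈ Icc (j - 1) (j + n), x i := by
  induction n generalizing x with
  | zero =>
    obtain ⟨i, rfl⟩ : ∃ i, j = i + 1 := ⟨j - 1, by ring⟩
    rw [Function.iterate_zero_apply, Nat.cast_zero, add_zero, add_sub_cancel_right,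
      Int.prod_Icc_add_one_right _ (by omega), Icc_self, prod_singleton]
    ring
  | succ n ih =>
    rw [Function.iterate_succ_apply, ih (F140_eq_zero_or_one hx), one_sub_F140_mul_F140 hx,
      prod_Icc_F140 hx (by omega), Nat.cast_succ, add_assoc]

theorem stmt8_general (x : ℤ → ℤ) (hx : ∀ i, x i = 0 ∨ x i = 1)
    (n : ℕ) (j : ℤ) :
    (F140^[n] x) j = (1 - x (j - 1)) * x j + ∏ i ∈ Finset.Icc (j - 1) (j + n), x i :=
  F140_iterate_apply hx n j

theorem stmt8 (x : ℤ → ℤ) (hx : ∀ i, x i = 0 ∨ x i = 1)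
    (n : ℕ) (hn : 2 ≤ n) (j : ℤ) :
    (F140^[n] x) j = (1 - x (j - 1)) * x j + ∏ i ∈ Finset.Icc (j - 1) (j + n), x i :=
  stmt8_general x hx n j
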